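/- Assume p01 ≤ p11 and β ∈ [0,1]. Let g : [0,1]^n → ℝ be affine in each coordinate and satisfy both: (A) 1 + g(ω_2,…,ω_n,ω_1) ≥ g(ω_1,…,ω_n) for all 0 ≤ ω_1 ≤ ⋯ ≤ ω_n ≤ 1, and (B) g(ω_1,…,ω_j, y, x, ω_{j+3},…,ω_n) ≥ g(ω_1,…,ω_j, x, y, ω_{j+3},…,ω_n) for all 0 ≤ ω_1 ≤ ⋯ ≤ ω_n ≤ 1, all 0 ≤ j ≤ n−2, and all x ≥ y in [0,1]. Define f : [0,1]^n → ℝ by f(ω_1,…,ω_n) = Σ_{i=n−k+1}^n ω_i + β · Σ_{l ∈ {0,1}^k} q(l; (ω_{n−k+1},…,ω_n)) · g(v_l), where v_l consists of (k−|l|) copies of p01, then τ(ω_1),…,τ(ω_{n−k}), then |l| copies of p11. Then f satisfies (B): f(ω_1,…,ω_j, y, x, ω_{j+3},…,ω_n) ≥ f(ω_1,…,ω_j, x, y, ω_{j+3},…,ω_n) for all 0 ≤ ω_1 ≤ ⋯ ≤ ω_n ≤ 1, all 0 ≤ j ≤ n−2, and all x ≥ y in [0,1]. -/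

import Mathlib

open Finset

noncomputable section

/-- The one-step belief update for an unobserved channel. -/
def tauF (p01 p11 : ℝ) (w : ℝ) : ℝ := w * p11 + (1 - w) * p01

/-- The set of admissible actions: subsets of `Fin n` of cardinality `k`. -/
def actions (n k : ℕ) : Finset (Finset (Fin n)) :=
  (Finset.univ : Finset (Fin n)).powersetCard k

lemma actions_nonempty {n k : ℕ} (hk : k ≤ n) : (actions n k).Nonempty := by
  rw [actions, Finset.powersetCard_nonempty, Finset.card_univ, Fintype.card_fin]
  exact hk

/-- Number of `true` entries in a `{0,1}^k` realization. -/
def countTrue {k : ℕ} (l : Fin k → Bool) : ℕ :=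
  (Finset.univ.filter fun i => l i = true).card

/-- `q(l; u) = ∏ u_i^{l_i} (1-u_i)^{1-l_i}`. -/
def qProb {k : ℕ} (u : Fin k → ℝ) (l : Fin k → Bool) : ℝ :=
  ∏ i : Fin k, if l i then u i else 1 - u i

/-- The top `k` coordinates `(ω_{n-k+1}, …, ω_n)` of a length-`n` vector. -/
def topCoords {n k : ℕ} (hk : k ≤ n) (ω : Fin n → ℝ) : Fin k → ℝ :=
  fun i => ω ⟨n - k + i.val, by omega⟩

/-- The vector `v_l`: `k - m` copies of `p01`, then `τ(ω_1),…,τ(ω_{n-k})`,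
then `m` copies of `p11`, where `m` is the number of ones in `l`. -/
def vl {n : ℕ} (k : ℕ) (p01 p11 : ℝ) (ω : Fin n → ℝ) (m : ℕ) : Fin n → ℝ :=
  fun j =>
    if j.val < k - m then p01
    else if j.val < n - m then tauF p01 p11 (ω ⟨j.val - (k - m), by omega⟩)
    else p11

/-- The greedy-policy value functions `W`, indexed by the number of remaining
steps (`r = 0` corresponds to the terminal time `T`). -/
def Wval (n k : ℕ) (hk : k ≤ n) (p01 p11 β : ℝ) : ℕ → (Fin n → ℝ) → ℝ
  | 0, ω => ∑ i : Fin n, if n - k ≤ i.val then ω i else 0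
  | r + 1, ω =>
      (∑ i : Fin n, if n - k ≤ i.val then ω i else 0) +
        β * ∑ l : Fin k → Bool,
          qProb (topCoords hk ω) l *
            Wval n k hk p01 p11 β r (vl k p01 p11 ω (countTrue l))

/-- The updated information state `ω^{a,s}`. -/
def nextState {n : ℕ} (p01 p11 : ℝ) (ω : Fin n → ℝ) (a : Finset (Fin n))
    (s : {i // i ∈ a} → Bool) : Fin n → ℝ :=
  fun j => if h : j ∈ a then (if s ⟨j, h⟩ then p11 else p01) else tauF p01 p11 (ω j)

/-- The probability of the realization `s` of the selected channels `a`. -/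
def obsProb {n : ℕ} (ω : Fin n → ℝ) (a : Finset (Fin n))
    (s : {i // i ∈ a} → Bool) : ℝ :=
  ∏ i : {i // i ∈ a}, if s i then ω i.val else 1 - ω i.val

/-- The optimal value functions `V`, indexed by the number of remaining steps. -/
def Vval (n k : ℕ) (hk : k ≤ n) (p01 p11 β : ℝ) : ℕ → (Fin n → ℝ) → ℝ
  | 0, ω => (actions n k).sup' (actions_nonempty hk) fun a => ∑ i ∈ a, ω i
  | r + 1, ω =>
      (actions n k).sup' (actions_nonempty hk) fun a =>
        (∑ i ∈ a, ω i) +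
          β * ∑ s : {i // i ∈ a} → Bool,
            obsProb ω a s * Vval n k hk p01 p11 β r (nextState p01 p11 ω a s)

/-- `Q_t(ω, a)`: the value of taking action `a` now and acting optimally
afterwards, indexed by the number of remaining steps. -/
def Qval (n k : ℕ) (hk : k ≤ n) (p01 p11 β : ℝ) : ℕ → (Fin n → ℝ) → Finset (Fin n) → ℝ
  | 0, ω, a => ∑ i ∈ a, ω i
  | r + 1, ω, a =>
      (∑ i ∈ a, ω i) +
        β * ∑ s : {i // i ∈ a} → Bool,
          obsProb ω a s * Vval n k hk p01 p11 β r (nextState p01 p11 ω a s)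

/-- Replace the coordinates in positions `j` and `j+1` (`0`-indexed) by `x` and `y`. -/
def upd2 {n : ℕ} (ω : Fin n → ℝ) (j : ℕ) (hj : j + 1 < n) (x y : ℝ) : Fin n → ℝ :=
  Function.update (Function.update ω ⟨j, by omega⟩ x) ⟨j + 1, hj⟩ y

/-- The cyclic shift `(ω_2, …, ω_n, ω_1)`. -/
def cyc {n : ℕ} (hn : 0 < n) (ω : Fin n → ℝ) : Fin n → ℝ :=
  fun j => ω ⟨(j.val + 1) % n, Nat.mod_lt _ hn⟩

end

/-!
Split the swapped pair according to its position relative to the top block of `k` selected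
channels. Strictly below it, only the `τ`-block of each `v_l` changes, by an adjacent swap, and (B)
for `g` applies term by term. Inside it, `f` is symmetric in the two entries. Across its lower edge,
`g(v_l)` is affine in the coordinate fed by `τ`, and conditioning on the first selected channel
shows that the gain equals `x - y` times an average of `1 + β (A (m + 1) - B m)`, where `B m`
(resp. `A (m + 1)`) puts `p11` (resp. `p01`) into that coordinate of `v_l` with `|l| = m`
(resp. `m + 1`). Property (A) rotates the leading `p01` of the `B m` vector to the end, and (B)
carries it back to the front of the `p11` block, which gives `B m ≤ 1 + A (m + 1)`.
-/

section QProb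

variable {k : ℕ}

lemma qProb_nonneg {u : Fin k → ℝ} (hu : ∀ i, u i ∈ Set.Icc (0:ℝ) 1) (l : Fin k → Bool) :
    0 ≤ qProb u l :=
  prod_nonneg fun i _ => by
    split
    · exact (hu i).1
    · linarith [(hu i).2]

lemma sum_qProb (u : Fin k → ℝ) : ∑ l, qProb u l = 1 := by
  simp only [qProb]
  rw [← Fintype.prod_sum (fun i (b : Bool) => if b then u i else 1 - u i)]
  simp

lemma countTrue_le (l : Fin k → Bool) : countTrue l ≤ k :=
  (card_filter_le _ _).trans_eq (card_fin k)

lemma countTrue_cons (b : Bool) (l : Fin k → Bool) :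
    countTrue (Fin.cons b l : Fin (k + 1) → Bool) = countTrue l + b.toNat := by
  simp only [countTrue, card_filter, Fin.sum_univ_succ, Fin.cons_zero, Fin.cons_succ]
  cases b <;> simp [add_comm]

lemma qProb_cons (u : Fin (k + 1) → ℝ) (b : Bool) (l : Fin k → Bool) :
    qProb u (Fin.cons b l) = (if b then u 0 else 1 - u 0) * qProb (Fin.tail u) l := by
  rw [qProb, Fin.prod_univ_succ]
  rfl

lemma sum_qProb_mul_eq_sum_tail (u : Fin (k + 1) → ℝ) (F : ℕ → ℝ) :
    ∑ l, qProb u l * F (countTrue l) =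
      ∑ l, qProb (Fin.tail u) l *
        ((1 - u 0) * F (countTrue l) + u 0 * F (countTrue l + 1)) := by
  rw [← (Fin.consEquiv fun _ => Bool).sum_comp, Fintype.sum_prod_type, Fintype.sum_bool,
    ← sum_add_distrib]
  refine sum_congr rfl fun l _ => ?_
  simp only [Fin.consEquiv, Equiv.coe_fn_mk, qProb_cons, countTrue_cons, Bool.toNat_true,
    Bool.toNat_false, add_zero, if_true, Bool.false_eq_true, if_false]
  ring

lemma sum_qProb_comp_perm (σ : Equiv.Perm (Fin k)) (u : Fin k → ℝ) (F : ℕ → ℝ) :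
    ∑ l, qProb (u ∘ σ) l * F (countTrue l) = ∑ l, qProb u l * F (countTrue l) := by
  rw [← (σ.arrowCongr (Equiv.refl Bool)).symm.sum_comp]
  refine sum_congr rfl fun l _ => ?_
  have hl : ∀ i, (σ.arrowCongr (Equiv.refl Bool)).symm l i = l (σ i) := fun i => rfl
  have hq : qProb (u ∘ σ) ((σ.arrowCongr (Equiv.refl Bool)).symm l) = qProb u l :=
    Equiv.prod_comp σ fun i => if l i then u i else 1 - u i
  have hc : countTrue ((σ.arrowCongr (Equiv.refl Bool)).symm l) = countTrue l := by
    simp only [countTrue, card_filter, hl]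
    exact Equiv.sum_comp σ fun i => if l i = true then 1 else 0
  rw [hq, hc]

end QProb

def oneStepValue {k : ℕ} (β : ℝ) (u : Fin k → ℝ) (F : ℕ → ℝ) : ℝ :=
  ∑ i, u i + β * ∑ l, qProb u l * F (countTrue l)

section OneStepValue

variable {k : ℕ} {β : ℝ}

lemma oneStepValue_comp_perm (σ : Equiv.Perm (Fin k)) (u : Fin k → ℝ) (F : ℕ → ℝ) :
    oneStepValue β (u ∘ σ) F = oneStepValue β u F := by
  rw [oneStepValue, oneStepValue, sum_qProb_comp_perm, Function.comp_def, Equiv.sum_comp σ u]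

lemma oneStepValue_mono (hβ : 0 ≤ β) {u : Fin k → ℝ} (hu : ∀ i, u i ∈ Set.Icc (0:ℝ) 1)
    {F F' : ℕ → ℝ} (hF : ∀ m ≤ k, F m ≤ F' m) : oneStepValue β u F ≤ oneStepValue β u F' := by
  unfold oneStepValue
  gcongr with l
  · exact qProb_nonneg hu l
  · exact hF _ (countTrue_le l)

/-- The right side exceeds the left by `(x - y) ∑ₗ q(l; t) (1 + β (A (|l| + 1) - B |l|))`. -/
lemma oneStepValue_cons_le (hβ : β ∈ Set.Icc (0:ℝ) 1) {x y : ℝ} (hyx : y ≤ x)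
    {t : Fin k → ℝ} (ht : ∀ i, t i ∈ Set.Icc (0:ℝ) 1) {A B F F' : ℕ → ℝ}
    (hF : ∀ m ≤ k + 1, F m = (1 - x) * A m + x * B m)
    (hF' : ∀ m ≤ k + 1, F' m = (1 - y) * A m + y * B m)
    (hBA : ∀ m ≤ k, B m ≤ 1 + A (m + 1)) :
    oneStepValue β (Fin.cons y t) F ≤ oneStepValue β (Fin.cons x t) F' := by
  have hterm : ∀ l : Fin k → Bool,
      qProb t l * ((1 - x) * F' (countTrue l) + x * F' (countTrue l + 1)) -
        qProb t l * ((1 - y) * F (countTrue l) + y * F (countTrue l + 1)) =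
      (x - y) * (qProb t l * (A (countTrue l + 1) - B (countTrue l))) := by
    intro l
    have hl := countTrue_le l
    rw [hF _ (by omega), hF _ (by omega), hF' _ (by omega), hF' _ (by omega)]
    ring
  have hdiff : oneStepValue β (Fin.cons x t) F' - oneStepValue β (Fin.cons y t) F =
      (x - y) * ∑ l, qProb t l * (1 + β * (A (countTrue l + 1) - B (countTrue l))) := by
    simp only [oneStepValue, Fin.sum_univ_succ, Fin.cons_zero, Fin.cons_succ,
      sum_qProb_mul_eq_sum_tail, Fin.tail_cons]
    have hsum : ∑ l, qProb t l * (1 + β * (A (countTrue l + 1) - B (countTrue l))) =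
        1 + β * ∑ l, qProb t l * (A (countTrue l + 1) - B (countTrue l)) := by
      simp only [mul_add, mul_one, sum_add_distrib, sum_qProb, mul_sum]
      exact congrArg _ (sum_congr rfl fun l _ => by ring)
    rw [hsum]
    linear_combination β * ((sum_sub_distrib _ _).symm.trans
      ((sum_congr rfl fun l _ => hterm l).trans (mul_sum _ _ _).symm))
  have hnonneg : 0 ≤ ∑ l, qProb t l * (1 + β * (A (countTrue l + 1) - B (countTrue l))) :=
    sum_nonneg fun l _ => mul_nonneg (qProb_nonneg ht l) (by
      nlinarith [hBA _ (countTrue_le l), hβ.1, hβ.2])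
  linarith [mul_nonneg (sub_nonneg.2 hyx) hnonneg]

end OneStepValue

section Vectors

variable {n : ℕ} {p01 p11 : ℝ}

lemma tauF_eq (p01 p11 w : ℝ) : tauF p01 p11 w = (1 - w) * p01 + w * p11 := by
  unfold tauF; ring

lemma tauF_mem_Icc (hord : p01 ≤ p11) {w : ℝ} (hw : w ∈ Set.Icc (0:ℝ) 1) :
    tauF p01 p11 w ∈ Set.Icc p01 p11 := by
  obtain ⟨h0, h1⟩ := hw
  constructor <;> simp only [tauF] <;> nlinarith

lemma tauF_mono (hord : p01 ≤ p11) : Monotone (tauF p01 p11) := fun w w' h => by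
  simp only [tauF]; nlinarith

/-- `vl k p01 p11 ω m` is `blockVec p01 p11 ω (k - m) (n - m)`. -/
def blockVec (p01 p11 : ℝ) (ω : Fin n → ℝ) (c d : ℕ) : Fin n → ℝ :=
  fun i => if i.val < c then p01
    else if i.val < d then tauF p01 p11 (ω ⟨i.val - c, by omega⟩)
    else p11

variable {ω : Fin n → ℝ}

lemma blockVec_mem_Icc (hp01 : p01 ∈ Set.Icc (0:ℝ) 1) (hp11 : p11 ∈ Set.Icc (0:ℝ) 1)
    (hord : p01 ≤ p11) (hω : ∀ i, ω i ∈ Set.Icc (0:ℝ) 1) (c d : ℕ) (i : Fin n) :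
    blockVec p01 p11 ω c d i ∈ Set.Icc (0:ℝ) 1 := by
  unfold blockVec
  split_ifs
  · exact hp01
  · exact Set.Icc_subset_Icc hp01.1 hp11.2 (tauF_mem_Icc hord (hω _))
  · exact hp11

lemma monotone_blockVec (hord : p01 ≤ p11) (hmono : Monotone ω)
    (hω : ∀ i, ω i ∈ Set.Icc (0:ℝ) 1) (c d : ℕ) : Monotone (blockVec p01 p11 ω c d) := by
  intro a b hab
  have hab' : a.val ≤ b.val := hab
  unfold blockVec
  split_ifs
  any_goals first | rfl | omega | exact hord
  · exact (tauF_mem_Icc hord (hω _)).1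
  · exact tauF_mono hord (hmono (Fin.mk_le_mk.2 (by omega)))
  · exact (tauF_mem_Icc hord (hω _)).2

lemma cyc_blockVec (hn : 0 < n) (c d : ℕ) :
    cyc hn (blockVec p01 p11 ω (c + 1) (d + 1)) =
      Function.update (blockVec p01 p11 ω c d) ⟨n - 1, by omega⟩ p01 := by
  funext i
  simp only [cyc, blockVec, Function.update_apply, Fin.ext_iff]
  rcases Nat.lt_or_ge (i.val + 1) n with h | h
  · simp only [Nat.mod_eq_of_lt h]
    split_ifs <;> first | rfl | omega | (congr 2; ext; simp only; omega)
  · simp only [show i.val + 1 = n by omega, Nat.mod_self]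
    split_ifs <;> first | rfl | omega

lemma upd2_apply (ω : Fin n → ℝ) (j : ℕ) (hj : j + 1 < n) (x y : ℝ) (i : Fin n) :
    upd2 ω j hj x y i = if i.val = j + 1 then y else if i.val = j then x else ω i := by
  simp only [upd2, Function.update_apply, Fin.ext_iff]

lemma upd2_self_left (ω : Fin n → ℝ) (j : ℕ) (hj : j + 1 < n) (y : ℝ) :
    upd2 ω j hj (ω ⟨j, by omega⟩) y = Function.update ω ⟨j + 1, hj⟩ y := by
  rw [upd2, Function.update_eq_self]

lemma upd2_self_right (ω : Fin n → ℝ) (j : ℕ) (hj : j + 1 < n) (x : ℝ) :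
    upd2 ω j hj x (ω ⟨j + 1, hj⟩) = Function.update ω ⟨j, by omega⟩ x := by
  rw [upd2, Function.update_eq_self_iff, Function.update_of_ne (by simp [Fin.ext_iff])]

end Vectors

/-- Property (A). -/
def IsCycleBounded {n : ℕ} (hn : 0 < n) (g : (Fin n → ℝ) → ℝ) : Prop :=
  ∀ ω : Fin n → ℝ, Monotone ω → (∀ i, ω i ∈ Set.Icc (0:ℝ) 1) → 1 + g (cyc hn ω) ≥ g ω

/-- Property (B). -/
def IsSwapMonotone {n : ℕ} (g : (Fin n → ℝ) → ℝ) : Prop :=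
  ∀ ω : Fin n → ℝ, Monotone ω → (∀ i, ω i ∈ Set.Icc (0:ℝ) 1) →
    ∀ (j : ℕ) (hj : j + 1 < n), ∀ x y : ℝ,
      x ∈ Set.Icc (0:ℝ) 1 → y ∈ Set.Icc (0:ℝ) 1 → y ≤ x →
        g (upd2 ω j hj y x) ≥ g (upd2 ω j hj x y)

section SwapMonotone

variable {n : ℕ} {g : (Fin n → ℝ) → ℝ}

/-- Bubble `y` forward through the constant tail, one adjacent swap at a time. -/
lemma IsSwapMonotone.le_update_of_forall_ge (hg : IsSwapMonotone g) {B : Fin n → ℝ}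
    (hmono : Monotone B) (hB : ∀ i, B i ∈ Set.Icc (0:ℝ) 1) {x y : ℝ}
    (hx : x ∈ Set.Icc (0:ℝ) 1) (hy : y ∈ Set.Icc (0:ℝ) 1) (hyx : y ≤ x) {c : ℕ}
    (htail : ∀ i : Fin n, c ≤ i.val → B i = x) {e : ℕ} (hce : c ≤ e) (he : e < n) :
    g (Function.update B ⟨e, he⟩ y) ≤ g (Function.update B ⟨c, by omega⟩ y) := by
  induction e, hce using Nat.le_induction with
  | base => rfl
  | succ e hce ih =>
    calc g (Function.update B ⟨e + 1, he⟩ y)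
        = g (upd2 B e he x y) := by rw [← upd2_self_left, htail _ hce]
      _ ≤ g (upd2 B e he y x) := hg B hmono hB e he x y hx hy hyx
      _ = g (Function.update B ⟨e, by omega⟩ y) := by
        rw [← upd2_self_right, htail ⟨e + 1, he⟩ (by simp only; omega)]
      _ ≤ g (Function.update B ⟨c, by omega⟩ y) := ih (by omega)

variable {p01 p11 : ℝ} {ω : Fin n → ℝ}

/-- Property (A) rotates the leading `p01` of the first vector to the last position, and
property (B) then moves it forward to position `d`, the front of the `p11` block. -/
lemma le_one_add_update_blockVec (hn : 0 < n)
    (hA : IsCycleBounded hn g)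
    (hB : IsSwapMonotone g) (hp01 : p01 ∈ Set.Icc (0:ℝ) 1) (hp11 : p11 ∈ Set.Icc (0:ℝ) 1)
    (hord : p01 ≤ p11) (hmono : Monotone ω) (hω : ∀ i, ω i ∈ Set.Icc (0:ℝ) 1)
    {c d : ℕ} (hcd : c ≤ d) (hd : d < n) :
    g (blockVec p01 p11 ω (c + 1) (d + 1)) ≤
      1 + g (Function.update (blockVec p01 p11 ω c d) ⟨d, hd⟩ p01) := by
  have hcycle := hA _ (monotone_blockVec hord hmono hω (c + 1) (d + 1))
    (blockVec_mem_Icc hp01 hp11 hord hω (c + 1) (d + 1))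
  rw [cyc_blockVec] at hcycle
  have hbubble := hB.le_update_of_forall_ge (monotone_blockVec hord hmono hω c d)
    (blockVec_mem_Icc hp01 hp11 hord hω c d) hp11 hp01 hord
    (fun i hi => by simp only [blockVec]; split_ifs <;> first | rfl | omega)
    (show d ≤ n - 1 by omega) (by omega)
  linarith

end SwapMonotone

lemma apply_convexComb_of_affine {φ : ℝ → ℝ}
    (hφ : ∀ t ∈ Set.Icc (0:ℝ) 1, φ t = (1 - t) * φ 0 + t * φ 1) {a b w : ℝ}
    (ha : a ∈ Set.Icc (0:ℝ) 1) (hb : b ∈ Set.Icc (0:ℝ) 1)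
    (hw : (1 - w) * a + w * b ∈ Set.Icc (0:ℝ) 1) :
    φ ((1 - w) * a + w * b) = (1 - w) * φ a + w * φ b := by
  rw [hφ _ hw, hφ a ha, hφ b hb]
  ring

def IsAffineInEachCoord {n : ℕ} (g : (Fin n → ℝ) → ℝ) : Prop :=
  ∀ ω : Fin n → ℝ, (∀ j, ω j ∈ Set.Icc (0:ℝ) 1) → ∀ i : Fin n, ∀ x ∈ Set.Icc (0:ℝ) 1,
    g (Function.update ω i x) =
      (1 - x) * g (Function.update ω i 0) + x * g (Function.update ω i 1)

section Backup

variable {n k : ℕ} {p01 p11 : ℝ} {ω : Fin n → ℝ} {j : ℕ} {x y : ℝ}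

def backup (hkn : k ≤ n) (p01 p11 β : ℝ) (g : (Fin n → ℝ) → ℝ) (ω : Fin n → ℝ) : ℝ :=
  oneStepValue β (topCoords hkn ω) fun m => g (vl k p01 p11 ω m)

lemma sum_ite_le_eq_sum_topCoords (hkn : k ≤ n) (ω : Fin n → ℝ) :
    (∑ i : Fin n, if n - k ≤ i.val then ω i else 0) = ∑ i, topCoords hkn ω i := by
  rw [← sum_filter]
  symm
  refine sum_nbij (fun i => ⟨n - k + i, by omega⟩)
    (fun i _ => mem_filter.2 ⟨mem_univ _, Nat.le_add_right _ _⟩) ?_ ?_ fun _ _ => rfl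
  · intro a _ b _ hab
    simpa [Fin.ext_iff] using hab
  · intro a ha
    simp only [coe_filter, mem_univ, true_and, Set.mem_ofPred_eq] at ha
    exact ⟨⟨a - (n - k), by omega⟩, by simp, Fin.ext (by simp only; omega)⟩

lemma vl_mem_Icc (hp01 : p01 ∈ Set.Icc (0:ℝ) 1) (hp11 : p11 ∈ Set.Icc (0:ℝ) 1)
    (hord : p01 ≤ p11) (hω : ∀ i, ω i ∈ Set.Icc (0:ℝ) 1) (m : ℕ) (i : Fin n) :
    vl k p01 p11 ω m i ∈ Set.Icc (0:ℝ) 1 :=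
  blockVec_mem_Icc hp01 hp11 hord hω _ _ i

lemma monotone_vl (hord : p01 ≤ p11) (hmono : Monotone ω) (hω : ∀ i, ω i ∈ Set.Icc (0:ℝ) 1)
    (m : ℕ) : Monotone (vl k p01 p11 ω m) :=
  monotone_blockVec hord hmono hω _ _

lemma topCoords_upd2_of_lt (hkn : k ≤ n) (hj : j + 1 < n) (hjk : j + 1 < n - k) :
    topCoords hkn (upd2 ω j hj x y) = topCoords hkn ω := by
  funext i
  simp only [topCoords, upd2_apply]
  split_ifs <;> first | rfl | omega

lemma vl_upd2_of_lt (hj : j + 1 < n) (hjk : j + 1 < n - k) {m : ℕ} (hm : m ≤ k) :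
    vl k p01 p11 (upd2 ω j hj x y) m =
      upd2 (vl k p01 p11 ω m) (j + (k - m)) (by omega) (tauF p01 p11 x) (tauF p01 p11 y) := by
  funext i
  simp only [vl, upd2_apply]
  split_ifs <;> first | rfl | omega

lemma topCoords_upd2_of_eq (hkn : k + 1 ≤ n) (hj : j + 1 < n) (hjk : j + 1 = n - (k + 1)) :
    topCoords hkn (upd2 ω j hj x y) = Fin.cons y (Fin.tail (topCoords hkn ω)) := by
  funext i
  refine Fin.cases ?_ (fun i => ?_) i
  · simp only [topCoords, upd2_apply, Fin.cons_zero, Fin.val_zero]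
    split_ifs <;> first | rfl | omega
  · simp only [topCoords, upd2_apply, Fin.cons_succ, Fin.tail, Fin.val_succ]
    split_ifs <;> first | rfl | omega

lemma vl_upd2_of_eq (hj : j + 1 < n) (hjk : j + 1 = n - k) {m : ℕ} (hm : m ≤ k) :
    vl k p01 p11 (upd2 ω j hj x y) m =
      Function.update (vl k p01 p11 ω m) ⟨n - m - 1, by omega⟩ (tauF p01 p11 x) := by
  funext i
  simp only [vl, upd2_apply, Function.update_apply, Fin.ext_iff]
  split_ifs <;> first | rfl | omega

lemma update_vl_eq_blockVec (hkn : k < n) {m : ℕ} (hm : m + 1 ≤ k) :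
    Function.update (vl k p01 p11 ω m) ⟨n - m - 1, by omega⟩ p11 =
      blockVec p01 p11 ω (k - (m + 1) + 1) (n - m - 2 + 1) := by
  funext i
  simp only [vl, blockVec, Function.update_apply, Fin.ext_iff]
  split_ifs <;> first | rfl | omega | (congr 2; ext; simp only; omega)

lemma update_vl_succ_eq_update_blockVec (hkn : k < n) {m : ℕ} (hm : m + 1 ≤ k) :
    Function.update (vl k p01 p11 ω (m + 1)) ⟨n - (m + 1) - 1, by omega⟩ p01 =
      Function.update (blockVec p01 p11 ω (k - (m + 1)) (n - m - 2)) ⟨n - m - 2, by omega⟩ p01 := by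
  funext i
  simp only [vl, blockVec, Function.update_apply, Fin.ext_iff]
  split_ifs <;> first | rfl | omega

lemma topCoords_upd2_swap (hkn : k ≤ n) (hj : j + 1 < n) (hjk : n - k ≤ j) :
    topCoords hkn (upd2 ω j hj y x) =
      topCoords hkn (upd2 ω j hj x y) ∘
        Equiv.swap (⟨j - (n - k), by omega⟩ : Fin k) ⟨j + 1 - (n - k), by omega⟩ := by
  funext i
  simp only [topCoords, upd2_apply, Function.comp_apply, Equiv.swap_apply_def, Fin.ext_iff]
  split_ifs <;> first | rfl | omega | (dsimp only at *; omega)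

lemma vl_upd2_of_le (hj : j + 1 < n) (hjk : n - k ≤ j) (m : ℕ) :
    vl k p01 p11 (upd2 ω j hj x y) m = vl k p01 p11 ω m := by
  funext i
  simp only [vl, upd2_apply]
  split_ifs <;> first | rfl | omega

end Backup

section Induction

variable {n k : ℕ} {p01 p11 β : ℝ} {g : (Fin n → ℝ) → ℝ} {ω : Fin n → ℝ} {j : ℕ} {x y : ℝ}

lemma backup_upd2_le_of_lt (hkn : k ≤ n) (hB : IsSwapMonotone g)
    (hp01 : p01 ∈ Set.Icc (0:ℝ) 1) (hp11 : p11 ∈ Set.Icc (0:ℝ) 1) (hord : p01 ≤ p11)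
    (hβ : 0 ≤ β) (hmono : Monotone ω) (hω : ∀ i, ω i ∈ Set.Icc (0:ℝ) 1)
    (hj : j + 1 < n) (hjk : j + 1 < n - k)
    (hx : x ∈ Set.Icc (0:ℝ) 1) (hy : y ∈ Set.Icc (0:ℝ) 1) (hyx : y ≤ x) :
    backup hkn p01 p11 β g (upd2 ω j hj x y) ≤ backup hkn p01 p11 β g (upd2 ω j hj y x) := by
  unfold backup
  rw [topCoords_upd2_of_lt hkn hj hjk, topCoords_upd2_of_lt hkn hj hjk]
  refine oneStepValue_mono hβ (fun i => hω _) fun m hm => ?_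
  rw [vl_upd2_of_lt hj hjk hm, vl_upd2_of_lt hj hjk hm]
  have hIcc := Set.Icc_subset_Icc hp01.1 hp11.2
  exact hB _ (monotone_vl hord hmono hω m) (vl_mem_Icc hp01 hp11 hord hω m) _ _ _ _
    (hIcc (tauF_mem_Icc hord hx)) (hIcc (tauF_mem_Icc hord hy)) (tauF_mono hord hyx)

lemma backup_upd2_le_of_eq (hkn : k + 1 ≤ n) (hn : 0 < n)
    (hA : IsCycleBounded hn g)
    (hB : IsSwapMonotone g)
    (haffine : IsAffineInEachCoord g)
    (hp01 : p01 ∈ Set.Icc (0:ℝ) 1) (hp11 : p11 ∈ Set.Icc (0:ℝ) 1) (hord : p01 ≤ p11)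
    (hβ : β ∈ Set.Icc (0:ℝ) 1) (hmono : Monotone ω) (hω : ∀ i, ω i ∈ Set.Icc (0:ℝ) 1)
    (hj : j + 1 < n) (hjk : j + 1 = n - (k + 1))
    (hx : x ∈ Set.Icc (0:ℝ) 1) (hy : y ∈ Set.Icc (0:ℝ) 1) (hyx : y ≤ x) :
    backup hkn p01 p11 β g (upd2 ω j hj x y) ≤ backup hkn p01 p11 β g (upd2 ω j hj y x) := by
  unfold backup
  rw [topCoords_upd2_of_eq hkn hj hjk, topCoords_upd2_of_eq hkn hj hjk]
  set A : ℕ → ℝ := fun m =>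
    g (Function.update (vl (k + 1) p01 p11 ω m) ⟨n - m - 1, by omega⟩ p01)
  set B : ℕ → ℝ := fun m =>
    g (Function.update (vl (k + 1) p01 p11 ω m) ⟨n - m - 1, by omega⟩ p11)
  have hF : ∀ {a b : ℝ}, a ∈ Set.Icc (0:ℝ) 1 → ∀ m ≤ k + 1,
      g (vl (k + 1) p01 p11 (upd2 ω j hj a b) m) = (1 - a) * A m + a * B m := by
    intro a b ha m hm
    rw [vl_upd2_of_eq hj hjk hm, tauF_eq]
    refine apply_convexComb_of_affine (haffine _ (vl_mem_Icc hp01 hp11 hord hω m) _) hp01 hp11 ?_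
    rw [← tauF_eq]
    exact Set.Icc_subset_Icc hp01.1 hp11.2 (tauF_mem_Icc hord ha)
  refine oneStepValue_cons_le hβ hyx (fun i => hω _) (hF hx) (hF hy) fun m hm => ?_
  have hcycle := le_one_add_update_blockVec hn hA hB hp01 hp11 hord hmono hω
    (c := k + 1 - (m + 1)) (d := n - m - 2) (by omega) (by omega)
  simp only [A, B]
  rwa [update_vl_eq_blockVec (by omega) (by omega),
    update_vl_succ_eq_update_blockVec (by omega) (by omega)]

lemma backup_upd2_swap (hkn : k ≤ n) (hj : j + 1 < n) (hjk : n - k ≤ j) :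
    backup hkn p01 p11 β g (upd2 ω j hj y x) = backup hkn p01 p11 β g (upd2 ω j hj x y) := by
  unfold backup
  rw [topCoords_upd2_swap hkn hj hjk, oneStepValue_comp_perm]
  simp only [vl_upd2_of_le hj hjk]

theorem isSwapMonotone_backup (hkn : k ≤ n) (hn : 0 < n)
    (hA : IsCycleBounded hn g)
    (hB : IsSwapMonotone g)
    (haffine : IsAffineInEachCoord g)
    (hp01 : p01 ∈ Set.Icc (0:ℝ) 1) (hp11 : p11 ∈ Set.Icc (0:ℝ) 1) (hord : p01 ≤ p11)
    (hβ : β ∈ Set.Icc (0:ℝ) 1) :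
    IsSwapMonotone (backup hkn p01 p11 β g) := by
  intro ω hmono hω j hj x y hx hy hyx
  rcases lt_trichotomy (j + 1) (n - k) with hjk | hjk | hjk
  · exact backup_upd2_le_of_lt hkn hB hp01 hp11 hord hβ.1 hmono hω hj hjk hx hy hyx
  · obtain ⟨k, rfl⟩ : ∃ k', k = k' + 1 := ⟨k - 1, by omega⟩
    exact backup_upd2_le_of_eq hkn hn hA hB haffine hp01 hp11 hord hβ hmono hω hj hjk hx hy hyx
  · exact (backup_upd2_swap hkn hj (by omega)).ge

end Induction

/-- induction step for inequality (B) of Lemma 3.  If `g` is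
affine in each coordinate and satisfies (A) and (B), then the one-step backward
recursion `f` satisfies (B): for sorted `ω ∈ [0,1]^n`, `0 ≤ j ≤ n-2`, and
`x ≥ y` in `[0,1]`, `f(…, y, x, …) ≥ f(…, x, y, …)`. -/
theorem induction_step_B
    (n k : ℕ) (hk1 : 1 ≤ k) (hkn : k ≤ n)
    (p01 p11 β : ℝ)
    (hp01 : p01 ∈ Set.Icc (0:ℝ) 1) (hp11 : p11 ∈ Set.Icc (0:ℝ) 1)
    (hβ : β ∈ Set.Icc (0:ℝ) 1) (hord : p01 ≤ p11)
    (g : (Fin n → ℝ) → ℝ)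
    (haffine : ∀ ω : Fin n → ℝ, (∀ j, ω j ∈ Set.Icc (0:ℝ) 1) → ∀ i : Fin n,
      ∀ x ∈ Set.Icc (0:ℝ) 1,
        g (Function.update ω i x) =
          (1 - x) * g (Function.update ω i 0) + x * g (Function.update ω i 1))
    (hA : ∀ ω : Fin n → ℝ, Monotone ω → (∀ i, ω i ∈ Set.Icc (0:ℝ) 1) →
      1 + g (cyc (by omega) ω) ≥ g ω)
    (hB : ∀ ω : Fin n → ℝ, Monotone ω → (∀ i, ω i ∈ Set.Icc (0:ℝ) 1) →
      ∀ (j : ℕ) (hj : j + 1 < n), ∀ x y : ℝ,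
        x ∈ Set.Icc (0:ℝ) 1 → y ∈ Set.Icc (0:ℝ) 1 → y ≤ x →
          g (upd2 ω j hj y x) ≥ g (upd2 ω j hj x y))
    (f : (Fin n → ℝ) → ℝ)
    (hf : ∀ ω : Fin n → ℝ,
      f ω = (∑ i : Fin n, if n - k ≤ i.val then ω i else 0) +
        β * ∑ l : Fin k → Bool,
          qProb (topCoords hkn ω) l * g (vl k p01 p11 ω (countTrue l))) :
    ∀ ω : Fin n → ℝ, Monotone ω → (∀ i, ω i ∈ Set.Icc (0:ℝ) 1) →
      ∀ (j : ℕ) (hj : j + 1 < n), ∀ x y : ℝ,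
        x ∈ Set.Icc (0:ℝ) 1 → y ∈ Set.Icc (0:ℝ) 1 → y ≤ x →
          f (upd2 ω j hj y x) ≥ f (upd2 ω j hj x y) := by
  have hbackup : f = backup hkn p01 p11 β g := funext fun ω => by
    rw [hf, backup, oneStepValue, sum_ite_le_eq_sum_topCoords]
  subst hbackup
  exact isSwapMonotone_backup hkn (by omega) hA hB haffine hp01 hp11 hord hβ
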